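/- (First-step amplification.) Let Σ be a real d×d matrix and b ∈ ℝ^d with bᵀ Σ b ≠ 0. Then for every η, c ∈ ℝ and every x ∈ ℝ^d, setting g = c • (I − (bᵀΣb)⁻¹ Σ b bᵀ) x, one has ‖b − η g‖² = ‖b‖² + η² ‖g‖², and in particular ‖b − η g‖ ≥ ‖b‖. (A gradient-descent step on a batch-normalized neuron can only increase the magnitude of its weight vector; very small neurons become large after the first iteration.) -/

import Mathlib

/-!
Since `bᵀ Σ b bᵀ = (bᵀ Σ b) bᵀ`, the row vector `bᵀ` is annihilated by
`I − (bᵀΣb)⁻¹ Σ b bᵀ`, so every such gradient `g` is orthogonal to `b`, and the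
identity is Pythagoras for the orthogonal vectors `b` and `η g`.
-/

open Matrix

noncomputable def euclNorm {d : ℕ} (v : Fin d → ℝ) : ℝ := Real.sqrt (∑ i, v i ^ 2)

section Orthogonality

variable {d : ℕ} {b g : Fin d → ℝ}

theorem euclNorm_eq_norm_toLp (v : Fin d → ℝ) :
    euclNorm v = ‖(WithLp.toLp 2 v : EuclideanSpace ℝ (Fin d))‖ := by
  simp [euclNorm, EuclideanSpace.norm_eq]

theorem euclNorm_sub_smul_sq_of_dotProduct_eq_zero (hbg : b ⬝ᵥ g = 0) (η : ℝ) :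
    euclNorm (b - η • g) ^ 2 = euclNorm b ^ 2 + η ^ 2 * euclNorm g ^ 2 := by
  have hinner : inner ℝ (WithLp.toLp 2 b : EuclideanSpace ℝ (Fin d)) (WithLp.toLp 2 g) = 0 := by
    simpa [EuclideanSpace.inner_eq_star_dotProduct, dotProduct_comm] using hbg
  simp only [euclNorm_eq_norm_toLp, WithLp.toLp_sub, WithLp.toLp_smul, norm_sub_sq_real,
    inner_smul_right, hinner, norm_smul, Real.norm_eq_abs, mul_pow, sq_abs]
  ring

theorem euclNorm_le_euclNorm_sub_smul_of_dotProduct_eq_zero (hbg : b ⬝ᵥ g = 0) (η : ℝ) :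
    euclNorm b ≤ euclNorm (b - η • g) := by
  have hsq : euclNorm b ^ 2 ≤ euclNorm (b - η • g) ^ 2 := by
    rw [euclNorm_sub_smul_sq_of_dotProduct_eq_zero hbg]
    exact le_add_of_nonneg_right (by positivity)
  rw [euclNorm_eq_norm_toLp, euclNorm_eq_norm_toLp] at hsq ⊢
  exact pow_le_pow_iff_left₀ (norm_nonneg _) (norm_nonneg _) two_ne_zero |>.mp hsq

end Orthogonality

theorem vecMul_one_sub_inv_smul_mul_vecMulVec_self {n K : Type*} [Fintype n] [DecidableEq n]
    [Field K] (S : Matrix n n K) (b : n → K) (h : b ⬝ᵥ (S *ᵥ b) ≠ 0) :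
    b ᵥ* (1 - (b ⬝ᵥ (S *ᵥ b))⁻¹ • (S * vecMulVec b b)) = 0 := by
  rw [vecMul_sub, vecMul_one, vecMul_smul, ← vecMul_vecMul, vecMul_vecMulVec,
    ← dotProduct_mulVec, smul_smul, inv_mul_cancel₀ h, one_smul, sub_self]

/-- **first-step amplification.** For `bᵀΣb ≠ 0` and any learning rate
`η`, scalar `c` and data `x`, the gradient-descent step `b − ηg` with
`g = c (I − (bᵀΣb)⁻¹ Σ b bᵀ) x` satisfies `‖b − ηg‖² = ‖b‖² + η²‖g‖²`; in particular
`‖b − ηg‖ ≥ ‖b‖`. -/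
theorem first_step_amplification {d : ℕ}
    (S : Matrix (Fin d) (Fin d) ℝ) (b : Fin d → ℝ) (h : b ⬝ᵥ (S *ᵥ b) ≠ 0)
    (η c : ℝ) (x : Fin d → ℝ) :
    euclNorm (b - η • (c • (((1 : Matrix (Fin d) (Fin d) ℝ)
        - (b ⬝ᵥ (S *ᵥ b))⁻¹ • (S * vecMulVec b b)) *ᵥ x))) ^ 2
      = euclNorm b ^ 2 + η ^ 2 * euclNorm (c • (((1 : Matrix (Fin d) (Fin d) ℝ)
        - (b ⬝ᵥ (S *ᵥ b))⁻¹ • (S * vecMulVec b b)) *ᵥ x)) ^ 2 ∧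
    euclNorm b ≤ euclNorm (b - η • (c • (((1 : Matrix (Fin d) (Fin d) ℝ)
        - (b ⬝ᵥ (S *ᵥ b))⁻¹ • (S * vecMulVec b b)) *ᵥ x))) := by
  have hbg : b ⬝ᵥ (c • (((1 : Matrix (Fin d) (Fin d) ℝ)
      - (b ⬝ᵥ (S *ᵥ b))⁻¹ • (S * vecMulVec b b)) *ᵥ x)) = 0 := by
    rw [dotProduct_smul, dotProduct_mulVec, vecMul_one_sub_inv_smul_mul_vecMulVec_self S b h,
      zero_dotProduct, smul_zero]
  exact ⟨euclNorm_sub_smul_sq_of_dotProduct_eq_zero hbg η,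
    euclNorm_le_euclNorm_sub_smul_of_dotProduct_eq_zero hbg η⟩
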